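/- Let G be a compactly generated topological gyrogroup with countable neighborhood base {Vₙ} at 0 (V₀ = G, V_{n+1} ⊆ Vₙ symmetric), generated by a compact set K, and let D = {dₙ : n ∈ ω} be a countable dense subset. Then there exists a sequence {Eₙ : n ∈ ω} of finite subsets of G such that Eₙ ⊆ Vₙ, G = ⟨E₀ ∪ ⋯ ∪ Eₙ ∪ V_{n+1}⟩, and dₙ ∈ ⟨E₀ ∪ ⋯ ∪ Eₙ⟩ for each n; consequently S = ⋃ₙ Eₙ forms a sequence converging to 0 whose generated subgyrogroup is dense in G. -/
import Mathlib


universe u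

class Gyrogroup (G : Type u) where
  add : G → G → G
  zero : G
  neg : G → G
  gyr : G → G → G → G
  zero_add : ∀ x, add zero x = x
  add_zero : ∀ x, add x zero = x
  neg_add : ∀ x, add (neg x) x = zero
  add_neg : ∀ x, add x (neg x) = zero
  gyr_bij : ∀ x y, Function.Bijective (gyr x y)
  gyr_add : ∀ x y a b, gyr x y (add a b) = add (gyr x y a) (gyr x y b)
  left_assoc : ∀ x y z, add x (add y z) = add (add x y) (gyr x y z)
  loop : ∀ x y, gyr (add x y) y = gyr x y

namespace Gyrogroup

variable {G : Type u}

instance [Gyrogroup G] : Add G := ⟨Gyrogroup.add⟩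
instance [Gyrogroup G] : Zero G := ⟨Gyrogroup.zero⟩
instance [Gyrogroup G] : Neg G := ⟨Gyrogroup.neg⟩

/-- The gyrogroup cooperation `x ⊞ y = x ⊕ gyr[x, ⊖y](y)`. -/
def coadd [Gyrogroup G] (x y : G) : G := x + gyr x (-y) y

/-- `S` is a subgyrogroup: contains the identity and is closed under `⊕`, `⊖` and the
gyroautomorphisms. -/
def IsSubgyro [Gyrogroup G] (S : Set G) : Prop :=
  (0 : G) ∈ S ∧ (∀ ⦃a b : G⦄, a ∈ S → b ∈ S → a + b ∈ S) ∧
    (∀ ⦃a : G⦄, a ∈ S → -a ∈ S) ∧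
    ∀ ⦃a b c : G⦄, a ∈ S → b ∈ S → c ∈ S → gyr a b c ∈ S

/-- The subgyrogroup generated by `A`. -/
def gen [Gyrogroup G] (A : Set G) : Set G := ⋂₀ {S : Set G | IsSubgyro S ∧ A ⊆ S}

/-- `N` is a normal subgyrogroup: the kernel of a gyrogroup homomorphism. -/
def IsNormalSubgyro [Gyrogroup G] (N : Set G) : Prop :=
  ∃ (H : Type u) (i : Gyrogroup H) (f : G → H),
    (∀ a b : G, f (a + b) = i.add (f a) (f b)) ∧ N = f ⁻¹' {i.zero}

/-- A (Hausdorff) topological gyrogroup. -/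
class TopGyrogroup (G : Type u) [Gyrogroup G] [TopologicalSpace G] : Prop where
  t2 : T2Space G
  continuous_add : Continuous fun p : G × G => p.1 + p.2
  continuous_neg : Continuous fun x : G => -x

/-- `μ` is a neighborhood base at `0` consisting of gyr-invariant sets. -/
def IsGyroNhdBase [Gyrogroup G] [TopologicalSpace G] (μ : Set (Set G)) : Prop :=
  (∀ U ∈ μ, U ∈ nhds (0 : G)) ∧ (∀ W ∈ nhds (0 : G), ∃ U ∈ μ, U ⊆ W) ∧
    ∀ U ∈ μ, ∀ x y : G, gyr x y '' U = U

/-- A strongly topological gyrogroup: some neighborhood base at `0` is gyr-invariant. -/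
def StronglyTop (G : Type u) [Gyrogroup G] [TopologicalSpace G] : Prop :=
  ∃ μ : Set (Set G), IsGyroNhdBase μ

/-- `S` is a suitable set for `G`. -/
def IsSuitable [Gyrogroup G] [TopologicalSpace G] (S : Set G) : Prop :=
  DiscreteTopology S ∧ IsClosed (S ∪ {(0 : G)}) ∧ Dense (gen S)

end Gyrogroup

section Aux

open Gyrogroup

variable {G : Type u} [Gyrogroup G]

private lemma ladd (x y z : G) : x + (y + z) = (x + y) + gyr x y z :=
  Gyrogroup.left_assoc x y z

private lemma cancel {a x y : G} (h : a + x = a + y) : x = y := by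
  have e : ∀ z : G, -a + (a + z) = gyr (-a) a z := by
    intro z
    rw [ladd, show (-a) + a = (0 : G) from Gyrogroup.neg_add _,
      show (0 : G) + gyr (-a) a z = _ from Gyrogroup.zero_add _]
  have h2 : gyr (-a) a x = gyr (-a) a y := by rw [← e, ← e, h]
  exact (Gyrogroup.gyr_bij (-a) a).1 h2

private lemma gyr_zero_left (a : G) (z : G) : gyr (0 : G) a z = z := by
  have h := ladd (0 : G) a z
  rw [show (0 : G) + (a + z) = a + z from Gyrogroup.zero_add _,
    show (0 : G) + a = a from Gyrogroup.zero_add _] at h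
  exact (cancel h).symm

private lemma gyr_neg_self (a : G) : ∀ z, gyr (-a) a z = z := by
  intro z
  have h := Gyrogroup.loop (-a) a
  rw [show Gyrogroup.add (-a) a = (0 : G) from Gyrogroup.neg_add _] at h
  rw [← congrFun h z]
  exact gyr_zero_left a z

private lemma left_cancel (a b : G) : -a + (a + b) = b := by
  rw [ladd, show (-a) + a = (0 : G) from Gyrogroup.neg_add _,
    show (0 : G) + gyr (-a) a b = _ from Gyrogroup.zero_add _, gyr_neg_self]

private lemma neg_neg' (a : G) : -(-a) = a := by
  have h := left_cancel (-a) a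
  rw [show (-a) + a = (0 : G) from Gyrogroup.neg_add _,
    show -(-a) + (0:G) = -(-a) from Gyrogroup.add_zero _] at h
  exact h

private lemma left_cancel' (a b : G) : a + (-a + b) = b := by
  have h := left_cancel (-a) b
  rwa [neg_neg'] at h

private lemma gen_isSubgyro (A : Set G) : IsSubgyro (gen A) := by
  refine ⟨?_, ?_, ?_, ?_⟩
  · intro S hS; exact hS.1.1
  · intro a b ha hb S hS; exact hS.1.2.1 (ha S hS) (hb S hS)
  · intro a ha S hS; exact hS.1.2.2.1 (ha S hS)
  · intro a b c ha hb hc S hS; exact hS.1.2.2.2 (ha S hS) (hb S hS) (hc S hS)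

private lemma subset_gen (A : Set G) : A ⊆ gen A := by
  intro x hx S hS; exact hS.2 hx

private lemma gen_subset {A S : Set G} (hS : IsSubgyro S) (h : A ⊆ S) : gen A ⊆ S :=
  fun _ hx => hx S ⟨hS, h⟩

private lemma gen_mono {A B : Set G} (h : A ⊆ B) : gen A ⊆ gen B :=
  gen_subset (gen_isSubgyro B) (h.trans (subset_gen B))

private lemma gen_univ : gen (Set.univ : Set G) = Set.univ :=
  Set.eq_univ_of_univ_subset (subset_gen _)

private lemma exists_finite_gen {A : Set G} {x : G} (hx : x ∈ gen A) :
    ∃ F : Set G, F ⊆ A ∧ F.Finite ∧ x ∈ gen F := by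
  set T : Set G := {y | ∃ F : Set G, F ⊆ A ∧ F.Finite ∧ y ∈ gen F} with hT
  have hsub : IsSubgyro T := by
    refine ⟨⟨∅, by simp, Set.finite_empty, (gen_isSubgyro ∅).1⟩, ?_, ?_, ?_⟩
    · rintro a b ⟨F1, h1, hf1, hg1⟩ ⟨F2, h2, hf2, hg2⟩
      exact ⟨F1 ∪ F2, Set.union_subset h1 h2, hf1.union hf2,
        (gen_isSubgyro _).2.1 (gen_mono Set.subset_union_left hg1)
          (gen_mono Set.subset_union_right hg2)⟩
    · rintro a ⟨F1, h1, hf1, hg1⟩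
      exact ⟨F1, h1, hf1, (gen_isSubgyro _).2.2.1 hg1⟩
    · rintro a b c ⟨F1, h1, hf1, hg1⟩ ⟨F2, h2, hf2, hg2⟩ ⟨F3, h3, hf3, hg3⟩
      refine ⟨F1 ∪ F2 ∪ F3, Set.union_subset (Set.union_subset h1 h2) h3,
        (hf1.union hf2).union hf3, (gen_isSubgyro _).2.2.2 ?_ ?_ ?_⟩
      · exact gen_mono (Set.subset_union_left.trans Set.subset_union_left) hg1
      · exact gen_mono (Set.subset_union_right.trans Set.subset_union_left) hg2
      · exact gen_mono Set.subset_union_right hg3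
  have hA : A ⊆ T := fun y hy => ⟨{y}, by simpa using hy, Set.finite_singleton y,
    subset_gen _ rfl⟩
  exact gen_subset hsub hA hx

end Aux

open Gyrogroup
theorem exists_finite_sets_dense {G : Type u} [Gyrogroup G] [TopologicalSpace G]
    [TopGyrogroup G] (V : ℕ → Set G)
    (hVnhd : ∀ n, V n ∈ nhds (0 : G)) (hVbase : ∀ W ∈ nhds (0 : G), ∃ n, V n ⊆ W)
    (hV0 : V 0 = Set.univ) (hVdec : ∀ n, V (n + 1) ⊆ V n)
    (hVsym : ∀ n, (fun x : G => -x) '' V n = V n)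
    (K : Set G) (hK : IsCompact K) (hKgen : gen K = Set.univ)
    (d : ℕ → G) (hd : Dense (Set.range d)) :
    ∃ E : ℕ → Set G,
      (∀ n, (E n).Finite ∧ E n ⊆ V n) ∧
      (∀ n, gen ((⋃ i ≤ n, E i) ∪ V (n + 1)) = Set.univ) ∧
      (∀ n, d n ∈ gen (⋃ i ≤ n, E i)) ∧
      (∀ W ∈ nhds (0 : G), {x ∈ ⋃ n, E n | x ∉ W}.Finite) ∧
      Dense (gen (⋃ n, E n)) := by
  classical
  -- For every n, a finite subset of K together with V (n+1) generates G.
  have hcover : ∀ n : ℕ, ∃ F : Set G, F.Finite ∧ gen (F ∪ V (n + 1)) = Set.univ := by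
    intro n
    have hW : interior (V (n + 1)) ∈ nhds (0 : G) :=
      interior_mem_nhds.2 (hVnhd (n + 1))
    have hcont : ∀ x : G, Continuous fun z : G => -x + z := by
      intro x
      exact TopGyrogroup.continuous_add.comp (continuous_const.prodMk continuous_id)
    have hopen : ∀ x ∈ K, IsOpen ((fun z : G => -x + z) ⁻¹' interior (V (n + 1))) :=
      fun x _ => isOpen_interior.preimage (hcont x)
    have hcov : K ⊆ ⋃ x ∈ K, (fun z : G => -x + z) ⁻¹' interior (V (n + 1)) := by
      intro k hk
      refine Set.mem_biUnion hk ?_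
      have : -k + k = (0 : G) := Gyrogroup.neg_add k
      simpa [this] using mem_of_mem_nhds hW
    obtain ⟨F, hFK, hFfin, hFcov⟩ := hK.elim_finite_subcover_image hopen hcov
    refine ⟨F, hFfin, ?_⟩
    have hKsub : K ⊆ gen (F ∪ V (n + 1)) := by
      intro k hk
      obtain ⟨x, hxF, hxk⟩ := by simpa using hFcov hk
      have h1 : x ∈ gen (F ∪ V (n + 1)) := subset_gen _ (Or.inl hxF)
      have h2 : -x + k ∈ gen (F ∪ V (n + 1)) :=
        subset_gen _ (Or.inr (interior_subset hxk))
      have := (gen_isSubgyro (F ∪ V (n + 1))).2.1 h1 h2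
      rwa [left_cancel'] at this
    apply Set.eq_univ_of_univ_subset
    rw [← hKgen]
    exact gen_subset (gen_isSubgyro _) hKsub
  -- The inductive step.
  have hstep : ∀ (n : ℕ) (C : Set G), gen (C ∪ V n) = Set.univ →
      ∃ E : Set G, E.Finite ∧ E ⊆ V n ∧ gen ((C ∪ E) ∪ V (n + 1)) = Set.univ ∧
        d n ∈ gen (C ∪ E) := by
    intro n C hC
    obtain ⟨F, hFfin, hFgen⟩ := hcover n
    have hFd : (F ∪ {d n} : Set G).Finite := hFfin.union (Set.finite_singleton _)
    have hmem : ∀ f ∈ F ∪ {d n}, ∃ A : Set G, A ⊆ C ∪ V n ∧ A.Finite ∧ f ∈ gen A := by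
      intro f _
      have : f ∈ gen (C ∪ V n) := by rw [hC]; trivial
      exact exists_finite_gen this
    choose! A hA1 hA2 hA3 using hmem
    set E : Set G := (⋃ f ∈ F ∪ {d n}, A f) ∩ V n with hE
    have hEfin : E.Finite :=
      ((hFd.biUnion fun f hf => hA2 f hf).inter_of_left _)
    have hgenf : ∀ f ∈ F ∪ {d n}, f ∈ gen (C ∪ E) := by
      intro f hf
      have hAsub : A f ⊆ C ∪ E := by
        intro a ha
        rcases hA1 f hf ha with h | h
        · exact Or.inl h
        · exact Or.inr ⟨Set.mem_biUnion hf ha, h⟩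
      exact gen_mono hAsub (hA3 f hf)
    refine ⟨E, hEfin, Set.inter_subset_right, ?_, ?_⟩
    · apply Set.eq_univ_of_univ_subset
      rw [← hFgen]
      apply gen_subset (gen_isSubgyro _)
      apply Set.union_subset
      · intro f hf
        exact gen_mono Set.subset_union_left (hgenf f (Or.inl hf))
      · exact (Set.subset_union_right).trans (subset_gen _)
    · exact hgenf (d n) (Or.inr rfl)
  choose! Ef hEf1 hEf2 hEf3 hEf4 using hstep
  -- Cumulative sets.
  let Cseq : ℕ → Set G := fun n => Nat.rec (∅ : Set G) (fun k Ck => Ck ∪ Ef k Ck) n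
  have hCsucc : ∀ n, Cseq (n + 1) = Cseq n ∪ Ef n (Cseq n) := fun n => rfl
  set E : ℕ → Set G := fun n => Ef n (Cseq n) with hEdef
  have hinv : ∀ n, gen (Cseq n ∪ V n) = Set.univ := by
    intro n
    induction n with
    | zero =>
        show gen ((∅ : Set G) ∪ V 0) = Set.univ
        rw [hV0, Set.empty_union, gen_univ]
    | succ k ih =>
        show gen ((Cseq k ∪ Ef k (Cseq k)) ∪ V (k + 1)) = Set.univ
        exact hEf3 k (Cseq k) ih
  have hcum : ∀ n, Cseq (n + 1) = ⋃ i ≤ n, E i := by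
    intro n
    induction n with
    | zero =>
        show Cseq 0 ∪ E 0 = ⋃ i ≤ 0, E i
        rw [show Cseq 0 = (∅ : Set G) from rfl, Set.empty_union]
        ext x
        simp [Nat.le_zero]
    | succ k ih =>
        show Cseq (k + 1) ∪ E (k + 1) = ⋃ i ≤ k + 1, E i
        rw [ih]
        ext x
        simp only [Set.mem_union, Set.mem_iUnion, exists_prop]
        constructor
        · rintro (⟨i, hi, hx⟩ | hx)
          · exact ⟨i, hi.trans (Nat.le_succ k), hx⟩
          · exact ⟨k + 1, le_rfl, hx⟩
        · rintro ⟨i, hi, hx⟩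
          rcases Nat.lt_succ_iff_lt_or_eq.mp (Nat.lt_succ_of_le hi) with h | h
          · exact Or.inl ⟨i, Nat.lt_succ_iff.mp h, hx⟩
          · subst h
            exact Or.inr hx
  have hCE : ∀ n, Cseq n ∪ E n = ⋃ i ≤ n, E i := by
    intro n
    rw [← hcum n]
  refine ⟨E, ?_, ?_, ?_, ?_, ?_⟩
  · exact fun n => ⟨hEf1 n (Cseq n) (hinv n), hEf2 n (Cseq n) (hinv n)⟩
  · intro n
    rw [← hCE n]
    exact hEf3 n (Cseq n) (hinv n)
  · intro n
    rw [← hCE n]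
    exact hEf4 n (Cseq n) (hinv n)
  · intro W hW
    obtain ⟨m, hm⟩ := hVbase W hW
    have hmono : ∀ {i j : ℕ}, i ≤ j → V j ⊆ V i := by
      intro i j h
      induction h with
      | refl => exact subset_rfl
      | step h ih => exact (hVdec _).trans ih
    have hsub : {x ∈ ⋃ n, E n | x ∉ W} ⊆ ⋃ i ∈ Finset.range m, E i := by
      rintro x ⟨hx, hxW⟩
      obtain ⟨n, hn⟩ := Set.mem_iUnion.mp hx
      by_cases hnm : n < m
      · exact Set.mem_biUnion (Finset.mem_range.2 hnm) hn
      · exact absurd (hm (hmono (Nat.le_of_not_lt hnm) (hEf2 n (Cseq n) (hinv n) hn))) hxW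
    exact Set.Finite.subset
      ((Finset.range m).finite_toSet.biUnion fun i _ => hEf1 i (Cseq i) (hinv i)) hsub
  · apply hd.mono
    rintro x ⟨n, rfl⟩
    have h1 : d n ∈ gen (⋃ i ≤ n, E i) := by
      rw [← hCE n]; exact hEf4 n (Cseq n) (hinv n)
    exact gen_mono (Set.iUnion₂_subset fun i _ => Set.subset_iUnion E i) h1
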